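/- Let $D_1,C_1\subseteq\mathbb{F}_2^n$ and $D_2,C_2\subseteq\mathbb{F}_2^m$. Then $(D_1\mid D_2,\ C_1\mid C_2)$ is a poly-tiling of $\mathbb{F}_2^{n+m}$ if and only if $(D_1,C_1)$ is a poly-tiling of $\mathbb{F}_2^n$ and $(D_2,C_2)$ is a poly-tiling of $\mathbb{F}_2^m$. -/

import Mathlib

abbrev V (n : ℕ) := Fin n → ZMod 2

/-- Concatenation of a set of vectors of `𝔽₂ⁿ` with a set of vectors of `𝔽₂ᵐ`. -/
def concatSet {n m : ℕ} (A : Set (V n)) (B : Set (V m)) : Set (V (n + m)) :=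
  {z | ∃ a ∈ A, ∃ b ∈ B, z = Fin.append a b}

/-- `(D, C)` is a tiling of `𝔽₂ⁿ`. -/
def IsTiling {n : ℕ} (D C : Set (V n)) : Prop :=
  (⋃ c ∈ C, (fun x => c + x) '' D) = Set.univ ∧
  C.PairwiseDisjoint (fun c => (fun x => c + x) '' D)

/-- `γ` is a geodesic path of length `t` (for the Hamming distance). -/
def IsGeodesic {n : ℕ} (γ : ℕ → V n) (t : ℕ) : Prop :=
  (∀ i < t, hammingDist (γ i) (γ (i + 1)) = 1) ∧ hammingDist (γ 0) (γ t) = t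

/-- A polyhedromino: a nonempty set any two points of which are connected by a
geodesic path contained in the set. -/
def IsPolyhedromino {n : ℕ} (D : Set (V n)) : Prop :=
  D.Nonempty ∧ ∀ x ∈ D, ∀ y ∈ D, ∃ (t : ℕ) (γ : ℕ → V n),
    IsGeodesic γ t ∧ γ 0 = x ∧ γ t = y ∧ ∀ i ≤ t, γ i ∈ D

/-- A poly-tiling: a tiling whose tile is a polyhedromino. -/
def IsPolyTiling {n : ℕ} (D C : Set (V n)) : Prop :=
  IsTiling D C ∧ IsPolyhedromino D

/-! Under `Fin.append` everything splits blockwise: sums, membership in a concatenation, and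
the Hamming distance, which is additive. So covering and packing for the concatenated pair
split into those for the two factors. Geodesics in the factors, run one after the other, form
a geodesic in the concatenation. Conversely, a geodesic between two points sharing their
second block projects onto the first block to a path whose steps have length at most `1` and
whose end points are still at distance its length, which forces a geodesic. -/

namespace Fin

variable {α : Type*} {n m : ℕ}

theorem append_inj_iff {a c : Fin n → α} {b d : Fin m → α} :
    append a b = append c d ↔ a = c ∧ b = d :=
  ((appendEquiv n m).injective.eq_iff (a := (a, b)) (b := (c, d))).trans Prod.ext_iff

theorem exists_eq_append (z : Fin (n + m) → α) : ∃ a b, z = append a b :=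
  ⟨_, _, append_castAdd_natAdd.symm⟩

theorem forall_append {P : (Fin (n + m) → α) → Prop} : (∀ z, P z) ↔ ∀ a b, P (append a b) :=
  ⟨fun h _ _ => h _, fun h z => by obtain ⟨a, b, rfl⟩ := exists_eq_append z; exact h a b⟩

theorem append_add_append [Add α] (a c : Fin n → α) (b d : Fin m → α) :
    append a b + append c d = append (a + c) (b + d) := by
  funext i
  induction i using addCases <;> simp

theorem hammingDist_append [DecidableEq α] (a c : Fin n → α) (b d : Fin m → α) :
    hammingDist (append a b) (append c d) = hammingDist a c + hammingDist b d := by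
  simp only [hammingDist, Finset.card_filter, sum_univ_add, append_left, append_right]

end Fin

open Fin

variable {n m : ℕ}

section concatSet

variable {A : Set (V n)} {B : Set (V m)}

@[simp]
theorem append_mem_concatSet {a : V n} {b : V m} :
    append a b ∈ concatSet A B ↔ a ∈ A ∧ b ∈ B := by
  simp [concatSet, append_inj_iff]

theorem exists_mem_concatSet {P : V (n + m) → Prop} :
    (∃ z ∈ concatSet A B, P z) ↔ ∃ a ∈ A, ∃ b ∈ B, P (append a b) := by
  simp [concatSet, and_assoc]

theorem forall_mem_concatSet {P : V (n + m) → Prop} :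
    (∀ z ∈ concatSet A B, P z) ↔ ∀ a ∈ A, ∀ b ∈ B, P (append a b) :=
  ⟨fun h a ha b hb => h _ ⟨a, ha, b, hb, rfl⟩, fun h _ ⟨a, ha, b, hb, hz⟩ => hz ▸ h a ha b hb⟩

end concatSet

theorem isTiling_iff {k : ℕ} {D C : Set (V k)} :
    IsTiling D C ↔ (∀ z, ∃ c ∈ C, ∃ d ∈ D, c + d = z) ∧
      ∀ c ∈ C, ∀ c' ∈ C, ∀ d ∈ D, ∀ d' ∈ D, c + d = c' + d' → c = c' := by
  simp only [IsTiling, Set.eq_univ_iff_forall, Set.mem_iUnion₂, Set.mem_image, exists_prop,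
    Set.PairwiseDisjoint, Set.Pairwise, Function.onFun, Set.disjoint_left]
  refine and_congr Iff.rfl
    ⟨fun h c hc c' hc' d hd d' hd' hdd' => ?_, fun h c hc c' hc' hne z hz hz' => ?_⟩
  · by_contra hne
    exact h hc hc' hne ⟨d, hd, rfl⟩ ⟨d', hd', hdd'.symm⟩
  · obtain ⟨d, hd, rfl⟩ := hz
    obtain ⟨d', hd', hdd'⟩ := hz'
    exact hne (h c hc c' hc' d hd d' hd' hdd'.symm)

theorem isTiling_concatSet_iff {D₁ C₁ : Set (V n)} {D₂ C₂ : Set (V m)} :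
    IsTiling (concatSet D₁ D₂) (concatSet C₁ C₂) ↔ IsTiling D₁ C₁ ∧ IsTiling D₂ C₂ := by
  simp only [isTiling_iff, forall_mem_concatSet, exists_mem_concatSet]
  simp only [forall_append, append_add_append, append_inj_iff]
  constructor
  · rintro ⟨hcover, hpack⟩
    -- the factors of a representation of `0` pad the other coordinate block
    obtain ⟨c₁, hc₁, c₂, hc₂, d₁, hd₁, d₂, hd₂, -⟩ := hcover 0 0
    refine ⟨⟨fun x => ?_, fun c hc c' hc' d hd d' hd' h => ?_⟩,
      fun y => ?_, fun c hc c' hc' d hd d' hd' h => ?_⟩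
    · obtain ⟨c, hc, -, -, d, hd, -, -, h, -⟩ := hcover x 0
      exact ⟨c, hc, d, hd, h⟩
    · exact (hpack c hc c₂ hc₂ c' hc' c₂ hc₂ d hd d₂ hd₂ d' hd' d₂ hd₂ ⟨h, rfl⟩).1
    · obtain ⟨-, -, c, hc, -, -, d, hd, -, h⟩ := hcover 0 y
      exact ⟨c, hc, d, hd, h⟩
    · exact (hpack c₁ hc₁ c hc c₁ hc₁ c' hc' d₁ hd₁ d hd d₁ hd₁ d' hd' ⟨rfl, h⟩).2
  · rintro ⟨⟨hcover₁, hpack₁⟩, hcover₂, hpack₂⟩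
    refine ⟨fun x y => ?_, fun c₁ hc₁ c₂ hc₂ c₁' hc₁' c₂' hc₂' d₁ hd₁ d₂ hd₂ d₁' hd₁' d₂' hd₂' h =>
      ⟨hpack₁ c₁ hc₁ c₁' hc₁' d₁ hd₁ d₁' hd₁' h.1, hpack₂ c₂ hc₂ c₂' hc₂' d₂ hd₂ d₂' hd₂' h.2⟩⟩
    obtain ⟨c₁, hc₁, d₁, hd₁, h₁⟩ := hcover₁ x
    obtain ⟨c₂, hc₂, d₂, hd₂, h₂⟩ := hcover₂ y
    exact ⟨c₁, hc₁, c₂, hc₂, d₁, hd₁, d₂, hd₂, h₁, h₂⟩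

theorem hammingDist_le_sum_range {ι β : Type*} [Fintype ι] [DecidableEq β] (f : ℕ → ι → β)
    (t : ℕ) : hammingDist (f 0) (f t) ≤ ∑ i ∈ Finset.range t, hammingDist (f i) (f (i + 1)) := by
  have := dist_le_range_sum_dist (fun i => Hamming.toHamming (f i)) t
  simp only [Hamming.dist_eq_hammingDist, Hamming.ofHamming_toHamming] at this
  exact_mod_cast this

theorem isGeodesic_of_hammingDist_le_one {k t : ℕ} {γ : ℕ → V k}
    (hstep : ∀ i < t, hammingDist (γ i) (γ (i + 1)) ≤ 1)
    (hends : t ≤ hammingDist (γ 0) (γ t)) : IsGeodesic γ t := by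
  have hle : ∀ i ∈ Finset.range t, hammingDist (γ i) (γ (i + 1)) ≤ 1 :=
    fun i hi => hstep i (Finset.mem_range.1 hi)
  have hsum := hammingDist_le_sum_range γ t
  have htot : ∑ i ∈ Finset.range t, hammingDist (γ i) (γ (i + 1)) = t := by
    refine le_antisymm ?_ (hends.trans hsum)
    simpa using Finset.sum_le_sum hle
  refine ⟨fun i hi => ?_, le_antisymm (hsum.trans htot.le) hends⟩
  refine (Finset.sum_eq_sum_iff_of_le hle).1 ?_ i (Finset.mem_range.2 hi)
  simpa using htot

namespace IsGeodesic

variable {t : ℕ} {γ : ℕ → V n} {δ : ℕ → V m}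

theorem of_append_left (h : IsGeodesic (fun i => append (γ i) (δ i)) t) (hδ : δ 0 = δ t) :
    IsGeodesic γ t := by
  obtain ⟨hstep, hends⟩ := h
  simp only [hammingDist_append, hδ, hammingDist_self, add_zero] at hstep hends
  exact isGeodesic_of_hammingDist_le_one (fun i hi => by have := hstep i hi; omega) hends.ge

theorem of_append_right (h : IsGeodesic (fun i => append (γ i) (δ i)) t) (hγ : γ 0 = γ t) :
    IsGeodesic δ t := by
  obtain ⟨hstep, hends⟩ := h
  simp only [hammingDist_append, hγ, hammingDist_self, zero_add] at hstep hends
  exact isGeodesic_of_hammingDist_le_one (fun i hi => by have := hstep i hi; omega) hends.ge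

theorem append {t₁ t₂ : ℕ} (h₁ : IsGeodesic γ t₁) (h₂ : IsGeodesic δ t₂) :
    IsGeodesic (fun i => Fin.append (γ (min i t₁)) (δ (i - t₁))) (t₁ + t₂) := by
  refine ⟨fun i hi => ?_, by simp [hammingDist_append, h₁.2, h₂.2]⟩
  simp only [hammingDist_append]
  rcases lt_or_ge i t₁ with h | h
  · rw [min_eq_left h.le, min_eq_left h, Nat.sub_eq_zero_of_le h.le, Nat.sub_eq_zero_of_le h,
      h₁.1 i h, hammingDist_self]
  · rw [min_eq_right h, min_eq_right (by omega), Nat.sub_add_comm h, h₂.1 _ (by omega),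
      hammingDist_self]

end IsGeodesic

namespace IsPolyhedromino

variable {D₁ : Set (V n)} {D₂ : Set (V m)}

theorem concat (h₁ : IsPolyhedromino D₁) (h₂ : IsPolyhedromino D₂) :
    IsPolyhedromino (concatSet D₁ D₂) := by
  obtain ⟨⟨a, ha⟩, hconn₁⟩ := h₁
  obtain ⟨⟨b, hb⟩, hconn₂⟩ := h₂
  refine ⟨⟨append a b, append_mem_concatSet.2 ⟨ha, hb⟩⟩, forall_mem_concatSet.2
    fun x₁ hx₁ x₂ hx₂ => forall_mem_concatSet.2 fun y₁ hy₁ y₂ hy₂ => ?_⟩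
  obtain ⟨t₁, γ₁, hγ₁, h0₁, ht₁, hmem₁⟩ := hconn₁ x₁ hx₁ y₁ hy₁
  obtain ⟨t₂, γ₂, hγ₂, h0₂, ht₂, hmem₂⟩ := hconn₂ x₂ hx₂ y₂ hy₂
  refine ⟨t₁ + t₂, _, hγ₁.append hγ₂, by simp [h0₁, h0₂], by simp [ht₁, ht₂], fun i hi => ?_⟩
  exact append_mem_concatSet.2 ⟨hmem₁ _ (min_le_right _ _), hmem₂ _ (by omega)⟩

theorem of_concatSet_left (h : IsPolyhedromino (concatSet D₁ D₂)) : IsPolyhedromino D₁ := by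
  obtain ⟨⟨z, hz⟩, hconn⟩ := h
  obtain ⟨a, b, rfl⟩ := exists_eq_append z
  rw [append_mem_concatSet] at hz
  refine ⟨⟨a, hz.1⟩, fun x hx y hy => ?_⟩
  obtain ⟨t, γ, hγ, h0, ht, hmem⟩ := hconn (append x b) (append_mem_concatSet.2 ⟨hx, hz.2⟩)
    (append y b) (append_mem_concatSet.2 ⟨hy, hz.2⟩)
  choose γ₁ γ₂ hγ₁₂ using fun i => exists_eq_append (γ i)
  obtain rfl : γ = fun i => append (γ₁ i) (γ₂ i) := funext hγ₁₂
  simp only [append_inj_iff, append_mem_concatSet] at h0 ht hmem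
  exact ⟨t, γ₁, hγ.of_append_left (h0.2.trans ht.2.symm), h0.1, ht.1, fun i hi => (hmem i hi).1⟩

theorem of_concatSet_right (h : IsPolyhedromino (concatSet D₁ D₂)) : IsPolyhedromino D₂ := by
  obtain ⟨⟨z, hz⟩, hconn⟩ := h
  obtain ⟨a, b, rfl⟩ := exists_eq_append z
  rw [append_mem_concatSet] at hz
  refine ⟨⟨b, hz.2⟩, fun x hx y hy => ?_⟩
  obtain ⟨t, γ, hγ, h0, ht, hmem⟩ := hconn (append a x) (append_mem_concatSet.2 ⟨hz.1, hx⟩)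
    (append a y) (append_mem_concatSet.2 ⟨hz.1, hy⟩)
  choose γ₁ γ₂ hγ₁₂ using fun i => exists_eq_append (γ i)
  obtain rfl : γ = fun i => append (γ₁ i) (γ₂ i) := funext hγ₁₂
  simp only [append_inj_iff, append_mem_concatSet] at h0 ht hmem
  exact ⟨t, γ₂, hγ.of_append_right (h0.1.trans ht.1.symm), h0.2, ht.2, fun i hi => (hmem i hi).2⟩

end IsPolyhedromino

theorem isPolyhedromino_concatSet_iff {D₁ : Set (V n)} {D₂ : Set (V m)} :
    IsPolyhedromino (concatSet D₁ D₂) ↔ IsPolyhedromino D₁ ∧ IsPolyhedromino D₂ :=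
  ⟨fun h => ⟨.of_concatSet_left h, .of_concatSet_right h⟩, fun ⟨h₁, h₂⟩ => h₁.concat h₂⟩

theorem stmt_9 {n m : ℕ} (D₁ C₁ : Set (V n)) (D₂ C₂ : Set (V m)) :
    IsPolyTiling (concatSet D₁ D₂) (concatSet C₁ C₂) ↔
      IsPolyTiling D₁ C₁ ∧ IsPolyTiling D₂ C₂ := by
  simp only [IsPolyTiling, isTiling_concatSet_iff, isPolyhedromino_concatSet_iff]
  exact and_and_and_comm
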